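/- arXiv:2108.13135 — 2 statements merged into one kernel-verified Lean document; each statement's English description precedes it below -/
import Mathlib

section
/- Every simplicial group is a fibrant simplicial set (Kan complex), and every morphism of simplicial groups f: G → H which is surjective in each simplicial degree n ≥ 1 is a Kan fibration of underlying simplicial sets. -/
open CategoryTheory Simplicial SSet

/-- A morphism of simplicial sets is a Kan fibration if it has the right lifting
property with respect to all horn inclusions `Λ[n, i] → Δ[n]`. -/
def IsKanFibration {X Y : SSet} (p : X ⟶ Y) : Prop :=
  ∀ (n : ℕ) (i : Fin (n + 1)), HasLiftingProperty (Λ[n, i].ι) p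

/-- The Kan complex condition as defined in the older Mathlib (`SSet.KanComplex`):
every horn `Λ[n, i] ⟶ S` (for every `n : ℕ`) extends to `Δ[n] ⟶ S`. -/
class OldKanComplex (S : SSet) : Prop where
  hornFilling : ∀ ⦃n : ℕ⦄ ⦃i : Fin (n + 1)⦄ (σ₀ : (Λ[n, i] : SSet) ⟶ S),
    ∃ σ : Δ[n] ⟶ S, σ₀ = Λ[n, i].ι ≫ σ

/-!
Moore's argument. Let `x` be a compatible family of faces `x j` (`j ≠ i`) of a horn `Λ[n + 1, i]`
in a simplicial group `G`. If `y` already has some of the prescribed faces, then for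
`k ∈ {t, t + 1}` the element `σ t (x k * (δ k y)⁻¹) * y` has `k`-th face `x k`, and by the
simplicial identities and the compatibility of `x` its `j`-th faces for `j < t` and `j > t + 1`
are those of `y`. Correcting the faces `0, 1, …, i - 1` in increasing order and then
`n + 1, n, …, i + 1` in decreasing order produces a filler.

If all `x j * (δ j g)⁻¹` lie in a simplicial subgroup `P` and `y * g⁻¹ ∈ P`, every correction lies
in `P`; starting from `y = g`, the filler is thus found in the coset `P * g`. For `f : G ⟶ H`,
taking `P = ker f` and `g` a preimage of the simplex to be lifted turns this filler into a lift.
Surjectivity of `f` in degree `n` follows from degree `n + 1` because `δ 0 ∘ σ 0 = id`.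
-/

open Opposite

namespace SSet

lemma horn_zero_hom_ext {X : SSet} {i : Fin 1} (f g : (Λ[0, i] : SSet) ⟶ X) : f = g := by
  ext _ ⟨x, hx⟩
  exact (hx (Set.eq_univ_of_forall fun j ↦ Or.inr (Fin.subsingleton_one.elim j i))).elim

lemma horn.isCompatible_yonedaEquiv_symm_iff {X : SSet} {n : ℕ} {i : Fin (n + 3)}
    (x : ∀ j : Fin (n + 3), j ≠ i → X _⦋n + 1⦌) :
    horn.IsCompatible (fun j hj ↦ yonedaEquiv.symm (x j hj)) ↔
      ∀ (j k : Fin (n + 3)) (hj : j ≠ i) (hk : k ≠ i) (hjk : j < k),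
        X.δ (k.pred (Fin.ne_zero_of_lt hjk)) (x j hj) =
          X.δ (j.castPred (Fin.ne_last_of_lt hjk)) (x k hk) := by
  simp only [horn.isCompatible_iff, stdSimplex.δ_comp_yonedaEquiv_symm,
    yonedaEquiv.symm.injective.eq_iff]

lemma horn.isCompatible_yonedaEquiv_comp {X : SSet} {n : ℕ} {i : Fin (n + 2)}
    (σ : (Λ[n + 1, i] : SSet) ⟶ X) :
    horn.IsCompatible (fun j hj ↦ yonedaEquiv.symm (yonedaEquiv (horn.ι i j hj ≫ σ))) := by
  simpa using horn.IsCompatible.of_hom σ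

lemma horn.ι_comp_yonedaEquiv_symm_eq {X : SSet} {n : ℕ} {i : Fin (n + 2)}
    (σ : (Λ[n + 1, i] : SSet) ⟶ X) (y : X _⦋n + 1⦌)
    (hy : ∀ j hj, X.δ j y = yonedaEquiv (horn.ι i j hj ≫ σ)) :
    Λ[n + 1, i].ι ≫ yonedaEquiv.symm y = σ :=
  horn.hom_ext' fun j hj ↦ by
    rw [horn.ι_ι_assoc, stdSimplex.δ_comp_yonedaEquiv_symm, hy, Equiv.symm_apply_apply]

lemma horn.app_yonedaEquiv_ι_comp_of_commSq {X Y : SSet} {n : ℕ} {i : Fin (n + 2)}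
    {u : (Λ[n + 1, i] : SSet) ⟶ X} {p : X ⟶ Y} {v : Δ[n + 1] ⟶ Y}
    (sq : CommSq u Λ[n + 1, i].ι p v) (j : Fin (n + 2)) (hj : j ≠ i) :
    p.app _ (yonedaEquiv (horn.ι i j hj ≫ u)) = Y.δ j (yonedaEquiv v) := by
  rw [← yonedaEquiv_comp, Category.assoc, sq.w, horn.ι_ι_assoc, stdSimplex.yonedaEquiv_δ_comp]

section

variable {X : SSet} {n : ℕ} {i : Fin (n + 3)} {x : ∀ j : Fin (n + 3), j ≠ i → X _⦋n + 1⦌}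
  (hx : horn.IsCompatible fun j hj ↦ yonedaEquiv.symm (x j hj))
  {y : X _⦋n + 2⦌} {j k : Fin (n + 3)} (hj : j ≠ i) (hk : k ≠ i)
include hx

lemma δ_castPred_δ_eq_of_lt (hjk : j < k) (hy : X.δ j y = x j hj) :
    X.δ (j.castPred (Fin.ne_last_of_lt hjk)) (X.δ k y) =
      X.δ (j.castPred (Fin.ne_last_of_lt hjk)) (x k hk) := by
  have h := ConcreteCategory.congr_hom (X.δ_comp_δ' (i := j.castPred (Fin.ne_last_of_lt hjk))
    (by simpa using hjk)) y
  simp only [ConcreteCategory.comp_apply, Fin.castSucc_castPred] at h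
  rw [h, hy]
  exact (horn.isCompatible_yonedaEquiv_symm_iff x).1 hx j k hj hk hjk

lemma δ_pred_δ_eq_of_gt (hkj : k < j) (hy : X.δ j y = x j hj) :
    X.δ (j.pred (Fin.ne_zero_of_lt hkj)) (X.δ k y) =
      X.δ (j.pred (Fin.ne_zero_of_lt hkj)) (x k hk) := by
  have h := ConcreteCategory.congr_hom (X.δ_comp_δ' (i := k.castPred (Fin.ne_last_of_lt hkj))
    (by simpa using hkj)) y
  simp only [ConcreteCategory.comp_apply, Fin.castSucc_castPred] at h
  rw [← h, hy]
  exact ((horn.isCompatible_yonedaEquiv_symm_iff x).1 hx k j hk hj hkj).symm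

end

end SSet

namespace CategoryTheory.SimplicialObject

variable {G H : SimplicialObject GrpCat}

def IsSimplicialSubgroup (P : ∀ m, Subgroup (G.obj m)) : Prop :=
  ∀ ⦃m m' : SimplexCategoryᵒᵖ⦄ (φ : m ⟶ m') ⦃g : G.obj m⦄, g ∈ P m → G.map φ g ∈ P m'

lemma isSimplicialSubgroup_top : IsSimplicialSubgroup (G := G) fun _ ↦ ⊤ :=
  fun _ _ _ _ _ ↦ Subgroup.mem_top _

lemma isSimplicialSubgroup_ker (f : G ⟶ H) : IsSimplicialSubgroup fun m ↦ (f.app m).hom.ker := by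
  intro m m' φ g hg
  rw [MonoidHom.mem_ker] at hg ⊢
  rw [NatTrans.naturality_apply, hg, map_one]

lemma δ_σ_of_eq_castSucc_or_eq_succ {n : ℕ} {t : Fin (n + 1)} {k : Fin (n + 2)}
    (hk : k = t.castSucc ∨ k = t.succ) (z : G _⦋n⦌) : G.δ k (G.σ t z) = z := by
  rcases hk with rfl | rfl
  · exact ConcreteCategory.congr_hom G.δ_comp_σ_self z
  · exact ConcreteCategory.congr_hom G.δ_comp_σ_succ z

lemma δ_σ_eq_one_of_lt {n : ℕ} {t : Fin (n + 2)} {j : Fin (n + 3)} (hjt : j < t.castSucc)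
    {w : G _⦋n + 1⦌} (hw : G.δ (j.castPred (Fin.ne_last_of_lt hjt)) w = 1) :
    G.δ j (G.σ t w) = 1 := by
  obtain ⟨a, rfl⟩ := j.eq_castSucc_of_ne_last (Fin.ne_last_of_lt hjt)
  obtain ⟨u, rfl⟩ := t.eq_succ_of_ne_zero (Fin.ne_zero_of_lt hjt)
  have h := ConcreteCategory.congr_hom (G.δ_comp_σ_of_le (Fin.le_castSucc_iff.2 hjt)) w
  simp only [ConcreteCategory.comp_apply, Fin.castPred_castSucc] at h hw
  rw [h, hw, map_one]

lemma δ_σ_eq_one_of_gt {n : ℕ} {t : Fin (n + 2)} {j : Fin (n + 3)} (hjt : t.succ < j)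
    {w : G _⦋n + 1⦌} (hw : G.δ (j.pred (Fin.ne_zero_of_lt hjt)) w = 1) :
    G.δ j (G.σ t w) = 1 := by
  have h := ConcreteCategory.congr_hom (G.δ_comp_σ_of_gt' hjt) w
  simp only [ConcreteCategory.comp_apply] at h
  rw [h, hw, map_one]

section HornFilling

variable {P : ∀ m, Subgroup (G.obj m)} (hP : IsSimplicialSubgroup P) {n : ℕ} {i : Fin (n + 2)}
  {x : ∀ j, j ≠ i → G _⦋n⦌}
  (hx : horn.IsCompatible (X := G ⋙ forget GrpCat) fun j hj ↦ SSet.yonedaEquiv.symm (x j hj))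
  {g : G _⦋n + 1⦌} (hxg : ∀ j hj, x j hj * (G.δ j g)⁻¹ ∈ P _)
include hP hx hxg

lemma exists_δ_eq_preserving_δ (t : Fin (n + 1)) {k : Fin (n + 2)}
    (hk : k = t.castSucc ∨ k = t.succ) (hki : k ≠ i) {y : G _⦋n + 1⦌} (hy : y * g⁻¹ ∈ P _) :
    ∃ y' : G _⦋n + 1⦌, y' * g⁻¹ ∈ P _ ∧ G.δ k y' = x k hki ∧
      ∀ j hj, (j < t.castSucc ∨ t.succ < j) → G.δ j y = x j hj → G.δ j y' = x j hj := by
  set w := x k hki * (G.δ k y)⁻¹ with hw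
  have hwP : w ∈ P _ := by
    have : w = x k hki * (G.δ k g)⁻¹ * (G.δ k (y * g⁻¹))⁻¹ := by
      rw [hw, map_mul, map_inv, mul_inv_rev, inv_inv, mul_assoc, inv_mul_cancel_left]
    exact this ▸ mul_mem (hxg k hki) (inv_mem (hP _ hy))
  refine ⟨G.σ t w * y, ?_, ?_, fun j hj hjt hjy ↦ ?_⟩
  · rw [mul_assoc]
    exact mul_mem (hP _ hwP) hy
  · rw [map_mul, δ_σ_of_eq_castSucc_or_eq_succ hk, hw, inv_mul_cancel_right]
  obtain _ | n := n
  · have := t.isLt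
    simp only [Fin.lt_def, Fin.val_castSucc, Fin.val_succ] at hjt
    omega
  rw [map_mul, hjy, mul_eq_right]
  have hkt : t.castSucc ≤ k ∧ k ≤ t.succ := by
    rcases hk with rfl | rfl
    exacts [⟨le_rfl, Fin.castSucc_le_succ t⟩, ⟨Fin.castSucc_le_succ t, le_rfl⟩]
  rcases hjt with hjt | hjt
  · have hjk : j < k := hjt.trans_le hkt.1
    have e : G.δ (j.castPred (Fin.ne_last_of_lt hjk)) (G.δ k y) =
        G.δ (j.castPred (Fin.ne_last_of_lt hjk)) (x k hki) :=
      SSet.δ_castPred_δ_eq_of_lt hx hj hki hjk hjy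
    refine δ_σ_eq_one_of_lt hjt ?_
    rw [hw, map_mul, map_inv, e, mul_inv_cancel]
  · have hkj : k < j := hkt.2.trans_lt hjt
    have e : G.δ (j.pred (Fin.ne_zero_of_lt hkj)) (G.δ k y) =
        G.δ (j.pred (Fin.ne_zero_of_lt hkj)) (x k hki) :=
      SSet.δ_pred_δ_eq_of_gt hx hj hki hkj hjy
    refine δ_σ_eq_one_of_gt hjt ?_
    rw [hw, map_mul, map_inv, e, mul_inv_cancel]

lemma exists_δ_eq_of_lt (p : Fin (n + 2)) (hp : p ≤ i) :
    ∃ y : G _⦋n + 1⦌, y * g⁻¹ ∈ P _ ∧ ∀ j hj, j < p → G.δ j y = x j hj := by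
  induction p using Fin.induction with
  | zero => exact ⟨g, by simp, fun j _ hj ↦ absurd hj (Fin.not_lt_zero j)⟩
  | succ p ih =>
    have hpi : p.castSucc < i := Fin.castSucc_lt_iff_succ_le.2 hp
    obtain ⟨y, hy, hyx⟩ := ih hpi.le
    obtain ⟨y', hy', hk, hpres⟩ := exists_δ_eq_preserving_δ hP hx hxg p (Or.inl rfl) hpi.ne hy
    refine ⟨y', hy', fun j hj hjp ↦ ?_⟩
    rcases (Fin.le_castSucc_iff.2 hjp).lt_or_eq with hjp | rfl
    · exact hpres j hj (Or.inl hjp) (hyx j hj hjp)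
    · exact hk

lemma exists_δ_eq_of_lt_or_gt (q : Fin (n + 2)) (hq : i ≤ q) :
    ∃ y : G _⦋n + 1⦌, y * g⁻¹ ∈ P _ ∧ ∀ j hj, (j < i ∨ q < j) → G.δ j y = x j hj := by
  induction q using Fin.reverseInduction with
  | last =>
    obtain ⟨y, hy, hyx⟩ := exists_δ_eq_of_lt hP hx hxg i le_rfl
    exact ⟨y, hy, fun j hj hji ↦ hyx j hj (hji.resolve_right (not_lt.2 (Fin.le_last j)))⟩
  | cast q ih =>
    have hiq : i < q.succ := hq.trans_lt Fin.castSucc_lt_succ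
    obtain ⟨y, hy, hyx⟩ := ih hiq.le
    obtain ⟨y', hy', hk, hpres⟩ := exists_δ_eq_preserving_δ hP hx hxg q (Or.inr rfl) hiq.ne' hy
    refine ⟨y', hy', fun j hj hji ↦ ?_⟩
    rcases hji with hji | hqj
    · exact hpres j hj (Or.inl (hji.trans_le hq)) (hyx j hj (Or.inl hji))
    rcases (Fin.castSucc_lt_iff_succ_le.1 hqj).lt_or_eq with hqj | rfl
    · exact hpres j hj (Or.inr hqj) (hyx j hj (Or.inr hqj))
    · exact hk

theorem exists_mul_inv_mem_δ_eq :
    ∃ y : G _⦋n + 1⦌, y * g⁻¹ ∈ P _ ∧ ∀ j hj, G.δ j y = x j hj := by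
  obtain ⟨y, hy, hyx⟩ := exists_δ_eq_of_lt_or_gt hP hx hxg i le_rfl
  exact ⟨y, hy, fun j hj ↦ hyx j hj (lt_or_gt_of_ne hj)⟩

end HornFilling

instance oldKanComplex (G : SimplicialObject GrpCat) : OldKanComplex (G ⋙ forget GrpCat) where
  hornFilling
    | 0, _, _ => ⟨SSet.yonedaEquiv.symm (1 : G _⦋0⦌), horn_zero_hom_ext _ _⟩
    | _ + 1, _, σ₀ => by
      obtain ⟨y, -, hy⟩ := exists_mul_inv_mem_δ_eq isSimplicialSubgroup_top
        (horn.isCompatible_yonedaEquiv_comp σ₀) (g := 1) fun _ _ ↦ Subgroup.mem_top _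
      exact ⟨SSet.yonedaEquiv.symm y, (horn.ι_comp_yonedaEquiv_symm_eq σ₀ y hy).symm⟩

variable (f : G ⟶ H)

lemma surjective_app_of_surjective_app_succ {n : ℕ}
    (hf : Function.Surjective (f.app (op ⦋n + 1⦌))) : Function.Surjective (f.app (op ⦋n⦌)) := by
  intro b
  obtain ⟨a, ha⟩ := hf (H.σ 0 b)
  refine ⟨G.δ 0 a, (NatTrans.naturality_apply f _ a).trans ?_⟩
  rw [ha]
  exact ConcreteCategory.congr_hom (H.δ_comp_σ_self (i := 0)) b

lemma app_eq_of_mul_inv_mem_ker {m : SimplexCategoryᵒᵖ} {y g : G.obj m}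
    (h : y * g⁻¹ ∈ (f.app m).hom.ker) : f.app m y = f.app m g := by
  rwa [MonoidHom.mem_ker, map_mul, map_inv, mul_inv_eq_one] at h

theorem isKanFibration_whiskerRight_forget
    (hf : ∀ n : ℕ, Function.Surjective (f.app (op ⦋n⦌))) :
    IsKanFibration (Functor.whiskerRight f (forget GrpCat)) := by
  rintro (_ | n) i <;> refine ⟨fun {u v} sq ↦ ?_⟩
  · obtain ⟨g, hg⟩ := hf 0 (SSet.yonedaEquiv v)
    refine ⟨⟨⟨SSet.yonedaEquiv.symm g, horn_zero_hom_ext _ _, ?_⟩⟩⟩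
    rw [yonedaEquiv_symm_comp, Equiv.symm_apply_eq]
    exact hg
  · obtain ⟨g, hg⟩ := hf (n + 1) (SSet.yonedaEquiv v)
    have hxg : ∀ j hj,
        SSet.yonedaEquiv (horn.ι i j hj ≫ u) * (G.δ j g)⁻¹ ∈ (f.app _).hom.ker := by
      intro j hj
      rw [MonoidHom.mem_ker, map_mul, map_inv, mul_inv_eq_one]
      refine (horn.app_yonedaEquiv_ι_comp_of_commSq sq j hj).trans ?_
      rw [← hg]
      exact (NatTrans.naturality_apply f _ g).symm
    obtain ⟨y, hy, hyx⟩ := exists_mul_inv_mem_δ_eq (isSimplicialSubgroup_ker f)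
      (horn.isCompatible_yonedaEquiv_comp u) hxg
    refine ⟨⟨⟨SSet.yonedaEquiv.symm y, horn.ι_comp_yonedaEquiv_symm_eq u y hyx, ?_⟩⟩⟩
    rw [yonedaEquiv_symm_comp, Equiv.symm_apply_eq]
    exact (app_eq_of_mul_inv_mem_ker f hy).trans hg

end CategoryTheory.SimplicialObject

/-- Every simplicial group is a fibrant simplicial set (a Kan
complex), and every morphism of simplicial groups `f : G → H` which is surjective in
each simplicial degree `n ≥ 1` is a Kan fibration of underlying simplicial sets. -/
theorem stmt7 :
    (∀ G : SimplicialObject GrpCat, OldKanComplex (G ⋙ forget GrpCat)) ∧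
    (∀ (G H : SimplicialObject GrpCat) (f : G ⟶ H),
      (∀ n : ℕ, 1 ≤ n →
        Function.Surjective (f.app (Opposite.op (SimplexCategory.mk n)))) →
      IsKanFibration (X := G ⋙ forget GrpCat) (Y := H ⋙ forget GrpCat)
        (CategoryTheory.Functor.whiskerRight f (forget GrpCat))) :=
  ⟨fun _ ↦ inferInstance, fun _ _ f hf ↦
    SimplicialObject.isKanFibration_whiskerRight_forget f fun n ↦
      SimplicialObject.surjective_app_of_surjective_app_succ f (hf (n + 1) (Nat.le_add_left 1 n))⟩
end

section
/- Let A be a simplicial commutative ring. Then the unnormalized chain complex C(A) = ⊕_n A_n, with differential Σ (−1)^i d_i and the shuffle product a·x = Σ_{(σ,τ)∈P_{m,n}} sign(σ,τ) A(σ)(a)·A(τ)(x), is a strictly graded-commutative differential graded ring: for a ∈ A_m and b ∈ A_n one has a·b = (−1)^{mn} b·a, and a·a = 0 when m is odd. -/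
open CategoryTheory Simplicial Opposite

noncomputable section

/-- The monotone surjection `[m+n] → [k]` determined by a subset `s` of size `k`
of `{1, …, m+n}` (encoded as a subset of `Fin (m+n)` via `i ↦ i+1`): it sends `x` to
the number of elements of `s` (i.e. of jumps) below `x`. -/
def shufMap {N k : ℕ} (s : Finset (Fin N)) (hs : s.card = k) :
    SimplexCategory.mk N ⟶ SimplexCategory.mk k :=
  SimplexCategory.mkHom
    ⟨fun x => ⟨(s.filter (fun i : Fin N => (i : ℕ) < (x : ℕ))).card,
      Nat.lt_succ_of_le (hs ▸ Finset.card_filter_le s _)⟩,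
      fun x y hxy => by
        simp only [Fin.mk_le_mk]
        exact Finset.card_le_card (Finset.monotone_filter_right s
          (fun i _ hi => lt_of_lt_of_le hi hxy))⟩

/-- The sign of the `(m,n)`-shuffle `(σ, τ)` determined by the subset `s` (the set of
values of `σ`, shifted down by one); this is `(−1)^{∑_i (σ_i − i)}`, the sign of the
associated permutation of `{1, …, m+n}`. -/
def shufSign {N : ℕ} (s : Finset (Fin N)) : ℤ :=
  (-1) ^ ((∑ i ∈ s, ((i : ℕ) + 1)) + s.card * (s.card + 1) / 2)

lemma compl_card {m n : ℕ} (s : {s : Finset (Fin (m + n)) // s.card = m}) :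
    (s.1ᶜ : Finset (Fin (m + n))).card = n := by
  rw [Finset.card_compl, s.2, Fintype.card_fin]
  omega

/-- The shuffle product `A_m ⊗ A_n → A_{m+n}` of a simplicial commutative ring:
`a · b = ∑_{(σ,τ) ∈ P_{m,n}} sign(σ,τ) A(σ)(a) · A(τ)(b)`, the sum being over all
`(m,n)`-shuffles, where `A(σ)`, `A(τ)` are the degeneracy maps induced by the
monotone surjections `σ : [m+n] → [m]` and `τ : [m+n] → [n]`. -/
def sprod (A : SimplicialObject CommRingCat) (m n : ℕ)
    (a : A.obj (op (SimplexCategory.mk m))) (b : A.obj (op (SimplexCategory.mk n))) :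
    A.obj (op (SimplexCategory.mk (m + n))) :=
  ∑ s : {s : Finset (Fin (m + n)) // s.card = m},
    shufSign s.1 •
      (A.map (shufMap s.1 s.2).op a * A.map (shufMap s.1ᶜ (compl_card s)).op b)

end

/-!
Complementing the set of `σ`-values, `s ↦ sᶜ`, exchanges the roles of `σ` and `τ`, and since
`∑_{i ≤ m+n} i = ∑_{i ≤ m} i + ∑_{i ≤ n} i + mn` it multiplies the shuffle sign by `(−1)^{mn}`.
Reindexing the shuffle sum along this bijection gives graded commutativity. For `m = n` odd,
complementation is a fixed-point-free involution reversing the sign of each term, so the terms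
cancel in pairs; this gives `a · a = 0` without dividing by `2`.
-/

lemma triangle_add (m n : ℕ) :
    (m + n) * (m + n + 1) / 2 = m * (m + 1) / 2 + n * (n + 1) / 2 + m * n := by
  have key : (m + n) * (m + n + 1) = (m * (m + 1) + n * (n + 1)) + 2 * (m * n) := by ring
  rw [key, Nat.add_mul_div_left _ _ two_pos,
    Nat.add_div_of_dvd_right (Nat.even_mul_succ_self m).two_dvd]

lemma sum_fin_val_add_one (N : ℕ) : ∑ i : Fin N, ((i : ℕ) + 1) = N * (N + 1) / 2 := by
  have h := Finset.sum_range_succ' (fun i => i) N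
  rw [Finset.sum_range_id, add_zero] at h
  rw [Fin.sum_univ_eq_sum_range (· + 1), ← h, Nat.add_sub_cancel, mul_comm]

section Shuffle

open Finset

variable {N m n : ℕ} {s : Finset (Fin N)}

lemma card_eq_iff_card_compl_eq (h : m + n = N) : s.card = m ↔ sᶜ.card = n := by
  have := card_le_univ s
  rw [card_compl, Fintype.card_fin] at *
  omega

lemma shufSign_mul_self : shufSign s * shufSign s = 1 := by
  rw [shufSign, ← pow_add, ← two_mul, pow_mul, neg_one_sq, one_pow]

lemma shufSign_mul_shufSign_compl (h : m + n = N) (hs : s.card = m) :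
    shufSign s * shufSign sᶜ = (-1) ^ (m * n) := by
  have hsum : ∑ i ∈ s, ((i : ℕ) + 1) + ∑ i ∈ sᶜ, ((i : ℕ) + 1) = N * (N + 1) / 2 := by
    rw [sum_add_sum_compl, sum_fin_val_add_one]
  have hexp : ∑ i ∈ s, ((i : ℕ) + 1) + m * (m + 1) / 2 +
      (∑ i ∈ sᶜ, ((i : ℕ) + 1) + n * (n + 1) / 2) =
        m * n + 2 * (m * (m + 1) / 2 + n * (n + 1) / 2) := by
    have := triangle_add m n
    subst h
    omega
  rw [shufSign, shufSign, ← pow_add, hs, (card_eq_iff_card_compl_eq h).1 hs, hexp, pow_add,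
    pow_mul (-1 : ℤ) 2, neg_one_sq, one_pow, mul_one]

lemma shufSign_eq_neg_one_pow_mul_compl (h : m + n = N) (hs : s.card = m) :
    shufSign s = (-1) ^ (m * n) * shufSign sᶜ := by
  rw [← shufSign_mul_shufSign_compl h hs, mul_assoc, shufSign_mul_self, mul_one]

lemma shufMap_congr {k : ℕ} {s t : Finset (Fin N)} (h : s = t) (hs : s.card = k)
    (ht : t.card = k) :
    shufMap s hs = shufMap t ht := by
  subst h; rfl

def complEquiv (h : m + n = N) :
    {s : Finset (Fin N) // s.card = m} ≃ {t : Finset (Fin N) // t.card = n} where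
  toFun s := ⟨s.1ᶜ, (card_eq_iff_card_compl_eq h).1 s.2⟩
  invFun t := ⟨t.1ᶜ, (card_eq_iff_card_compl_eq ((add_comm n m).trans h)).1 t.2⟩
  left_inv s := Subtype.ext (compl_compl s.1)
  right_inv t := Subtype.ext (compl_compl t.1)

variable (A : SimplicialObject CommRingCat)

def shuffleTerm (h : m + n = N) (a : A.obj (op ⦋m⦌)) (b : A.obj (op ⦋n⦌))
    (s : {s : Finset (Fin N) // s.card = m}) : A.obj (op ⦋N⦌) :=
  shufSign s.1 • (A.map (shufMap s.1 s.2).op a *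
    A.map (shufMap s.1ᶜ ((card_eq_iff_card_compl_eq h).1 s.2)).op b)

/-- `sprod` with the total degree `N` kept free, so that the cast along `n + m = m + n`
becomes a `subst`. -/
def shuffleSum (h : m + n = N) (a : A.obj (op ⦋m⦌)) (b : A.obj (op ⦋n⦌)) : A.obj (op ⦋N⦌) :=
  ∑ s, shuffleTerm A h a b s

lemma sprod_eq_shuffleSum (a : A.obj (op ⦋m⦌)) (b : A.obj (op ⦋n⦌)) :
    sprod A m n a b = shuffleSum A rfl a b :=
  rfl

lemma cast_shuffleSum {N' : ℕ} (h : m + n = N) (e : N = N') (a : A.obj (op ⦋m⦌))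
    (b : A.obj (op ⦋n⦌)) :
    cast (congrArg (fun k => ((A.obj (op ⦋k⦌)) : Type)) e) (shuffleSum A h a b) =
      shuffleSum A (h.trans e) a b := by
  subst e; rfl

lemma shuffleTerm_complEquiv (h : m + n = N) (a : A.obj (op ⦋m⦌)) (b : A.obj (op ⦋n⦌))
    (s : {s : Finset (Fin N) // s.card = m}) :
    shuffleTerm A h a b s =
      (-1 : ℤ) ^ (m * n) • shuffleTerm A ((add_comm n m).trans h) b a (complEquiv h s) := by
  rw [shuffleTerm, shuffleTerm, complEquiv, Equiv.coe_fn_mk,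
    shufMap_congr (compl_compl s.1) _ s.2, mul_comm, smul_smul,
    ← shufSign_eq_neg_one_pow_mul_compl h s.2]

lemma shuffleSum_comm (h : m + n = N) (a : A.obj (op ⦋m⦌)) (b : A.obj (op ⦋n⦌)) :
    shuffleSum A h a b = (-1 : ℤ) ^ (m * n) • shuffleSum A ((add_comm n m).trans h) b a := by
  rw [shuffleSum, shuffleSum, smul_sum]
  exact Fintype.sum_equiv (complEquiv h) _ _ (shuffleTerm_complEquiv A h a b)

lemma shuffleSum_self_eq_zero (h : m + m = N) (hm : Odd m) (a : A.obj (op ⦋m⦌)) :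
    shuffleSum A h a a = 0 := by
  have hN : 0 < N := by obtain ⟨k, rfl⟩ := hm; omega
  have : Nonempty (Fin N) := ⟨⟨0, hN⟩⟩
  refine sum_involution (fun s _ => complEquiv h s) (fun s _ => ?_) (fun s _ _ => ?_)
    (fun _ _ => mem_univ _) (fun s _ => Subtype.ext (compl_compl s.1))
  · rw [shuffleTerm_complEquiv A h a a s, (hm.mul hm).neg_one_pow, neg_one_smul, neg_add_cancel]
  · exact fun hs => compl_ne_self (congrArg Subtype.val hs :)

end Shuffle

/-- Let `A` be a simplicial commutative ring.  Then the unnormalized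
chain complex `C(A) = ⊕_n A_n`, with differential `∑ (−1)^i d_i` and the shuffle
product, is a strictly graded-commutative (differential graded) ring: for `a ∈ A_m`
and `b ∈ A_n` one has `a · b = (−1)^{mn} b · a`, and `a · a = 0` when `m` is odd. -/
theorem stmt17 (A : SimplicialObject CommRingCat) :
    (∀ (m n : ℕ) (a : A.obj (op (SimplexCategory.mk m)))
        (b : A.obj (op (SimplexCategory.mk n))),
      sprod A m n a b = (-1 : ℤ) ^ (m * n) •
        cast (congrArg (fun k => ((A.obj (op (SimplexCategory.mk k))) : Type))
          (Nat.add_comm n m)) (sprod A n m b a)) ∧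
    (∀ m : ℕ, Odd m → ∀ a : A.obj (op (SimplexCategory.mk m)),
      sprod A m m a a = 0) := by
  refine ⟨fun m n a b => ?_, fun m hm a => shuffleSum_self_eq_zero A rfl hm a⟩
  rw [sprod_eq_shuffleSum, sprod_eq_shuffleSum, cast_shuffleSum A rfl (Nat.add_comm n m),
    shuffleSum_comm]
end
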